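/- Suppose d(n) ≥ 12 and d(n) is a highly composite number, with prime factorization d(n) = 2^{β_1} q_2^{β_2} ⋯ q_s^{β_s} where q_s is the largest prime factor of d(n). Then 2^{β_1} < 8 q_s^2. -/
import Mathlib

/-- `d n`: number of positive divisors of `n`. -/
def d (n : ℕ) : ℕ := (Nat.divisors n).card

/-- A positive integer `n` is highly composite if every smaller positive
integer has strictly fewer divisors. -/
def HighlyComposite (n : ℕ) : Prop :=
  0 < n ∧ ∀ m : ℕ, 0 < m → m < n → d m < d n

lemma d_prime_pow {p : ℕ} (hp : p.Prime) (k : ℕ) : d (p ^ k) = k + 1 := by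
  rw [d, Nat.divisors_prime_pow hp]
  simp

lemma d_mul_coprime {a b : ℕ} (h : a.Coprime b) : d (a * b) = d a * d b :=
  Nat.Coprime.card_divisors_mul h

/-- If d(n) ≥ 12 is highly composite with largest prime factor q_s and
2-exponent β₁, then 2^β₁ < 8 q_s². -/
theorem stmt_6 (n : ℕ) (hn : 0 < n) (h12 : 12 ≤ d n)
    (hhc : HighlyComposite (d n))
    (qs : ℕ) (hqs : qs.Prime) (hqsdvd : qs ∣ d n)
    (hmax : ∀ q : ℕ, q.Prime → q ∣ d n → q ≤ qs) :
    2 ^ ((d n).factorization 2) < 8 * qs ^ 2 := by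
  by_contra hcon
  push_neg at hcon
  set N := d n with hN
  set β := N.factorization 2 with hβ
  have hN0 : 0 < N := hhc.1
  have hqs2 : 2 ≤ qs := hqs.two_le
  obtain ⟨p, hp, hqsp, hp2qs⟩ := Nat.exists_prime_lt_and_le_two_mul qs (by omega)
  set a := Nat.log 2 p + 1 with ha
  have hpa : p < 2 ^ a := Nat.lt_pow_succ_log_self (by norm_num) p
  have hap : 2 ^ (a - 1) ≤ p := by
    simpa [ha] using Nat.pow_log_le_self 2 (by omega : p ≠ 0)
  have ha2 : 2 ≤ a := by
    have : 0 < Nat.log 2 p := Nat.log_pos (by norm_num) (by omega)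
    omega
  -- qs ≥ 2^(a-2)
  have hqsa : 2 ^ (a - 2) ≤ qs := by
    have h1 : 2 * 2 ^ (a - 2) = 2 ^ (a - 1) := by
      rw [← pow_succ']
      congr 1
      omega
    omega
  -- 2^(2a-1) ≤ 2^β
  have hpow : 2 ^ (2 * a - 1) ≤ 2 ^ β := by
    calc 2 ^ (2 * a - 1) = 8 * (2 ^ (a - 2)) ^ 2 := by
          rw [← pow_mul]
          rw [show (8 : ℕ) = 2 ^ 3 by norm_num, ← pow_add]
          congr 1
          omega
      _ ≤ 8 * qs ^ 2 := by
          gcongr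
      _ ≤ 2 ^ β := hcon
  have hβa : 2 * a - 1 ≤ β := (Nat.pow_le_pow_iff_right (by norm_num)).mp hpow
  have hβa' : a ≤ β := by omega
  -- decompose N
  set m := N / 2 ^ β with hm
  have hNdecomp : 2 ^ β * m = N := Nat.ordProj_mul_ordCompl_eq_self N 2
  have hm0 : 0 < m := Nat.ordCompl_pos 2 (by omega)
  have h2m : ¬ (2 ∣ m) := Nat.not_dvd_ordCompl Nat.prime_two (by omega)
  have hpN : ¬ (p ∣ N) := fun hd => absurd (hmax p hp hd) (by omega)
  have hpm : ¬ (p ∣ m) := fun hd => hpN (hd.trans (Nat.ordCompl_dvd N 2))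
  have hp2 : p ≠ 2 := by omega
  -- coprimalities
  have hc1 : Nat.Coprime (2 ^ (β - a)) (m * p) := by
    apply Nat.Coprime.pow_left
    apply Nat.Coprime.mul_right
    · exact (Nat.Prime.coprime_iff_not_dvd Nat.prime_two).mpr h2m
    · exact (Nat.coprime_primes Nat.prime_two hp).mpr (Ne.symm hp2)
  have hc2 : Nat.Coprime m p := (Nat.Prime.coprime_iff_not_dvd hp).mpr hpm |>.symm
  have hc3 : Nat.Coprime (2 ^ β) m := Nat.Coprime.pow_left _ ((Nat.Prime.coprime_iff_not_dvd Nat.prime_two).mpr h2m)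
  -- the rival number
  set N' := 2 ^ (β - a) * (m * p) with hN'
  have hp0 : 0 < p := hp.pos
  have hN'0 : 0 < N' := by positivity
  have hN'lt : N' < N := by
    calc N' < 2 ^ (β - a) * (m * 2 ^ a) := mul_lt_mul_of_pos_left (mul_lt_mul_of_pos_left hpa hm0) (pow_pos two_pos _)
      _ = 2 ^ (β - a) * 2 ^ a * m := by ring
      _ = 2 ^ β * m := by rw [← pow_add]; congr 2; omega
      _ = N := hNdecomp
  have hdN : d N = (β + 1) * d m := by
    rw [← hNdecomp, d_mul_coprime hc3, d_prime_pow Nat.prime_two]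
  have hdN' : d N' = (β - a + 1) * (d m * 2) := by
    rw [hN', d_mul_coprime hc1, d_mul_coprime hc2, d_prime_pow Nat.prime_two,
      show p = p ^ 1 by ring, d_prime_pow hp]
  have hdm1 : 1 ≤ d m := by
    rw [d]
    exact Finset.card_pos.mpr ⟨m, Nat.mem_divisors_self m (by omega)⟩
  have hge : d N ≤ d N' := by
    rw [hdN, hdN']
    have : β + 1 ≤ (β - a + 1) * 2 := by omega
    calc (β + 1) * d m ≤ ((β - a + 1) * 2) * d m := Nat.mul_le_mul_right _ this
      _ = (β - a + 1) * (d m * 2) := by ring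
  exact absurd (hhc.2 N' hN'0 hN'lt) (by omega)
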